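/- arXiv:2005.05042 — 3 statements merged into one kernel-verified Lean document; each statement's English description precedes it below -/
import Mathlib

section
/- Let k ≥ 1 be an integer and let G be a finite simple graph on n vertices such that no induced subgraph of G is an immature k-creature. Then G has at most k^2 · n^(2k-2) minimal separators. -/
namespace Paper

open SimpleGraph

variable {V : Type*}

/-- The set of neighbors of `v` inside the set `H`. -/
def nbrsIn (G : SimpleGraph V) (v : V) (H : Set V) : Set V :=
  {u | u ∈ H ∧ G.Adj v u}

/-- The vertex set of a walk. -/
def supp {G : SimpleGraph V} {a b : V} (P : G.Walk a b) : Set V :=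
  {v | v ∈ P.support}

/-- `H` is a hole of `G`: an induced cycle of length at least 4.  (A finite
graph is a cycle iff it is connected and `2`-regular.) -/
def IsHole (G : SimpleGraph V) (H : Set V) : Prop :=
  H.Finite ∧ 4 ≤ H.ncard ∧ (G.induce H).Connected ∧
    ∀ v ∈ H, (nbrsIn G v H).ncard = 2

/-- `G` contains a theta as an induced subgraph. -/
def HasTheta (G : SimpleGraph V) : Prop :=
  ∃ (a b : V) (P₁ P₂ P₃ : G.Walk a b),
    a ≠ b ∧ ¬ G.Adj a b ∧
    P₁.IsPath ∧ P₂.IsPath ∧ P₃.IsPath ∧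
    2 ≤ P₁.length ∧ 2 ≤ P₂.length ∧ 2 ≤ P₃.length ∧
    (∀ v, v ∈ P₁.support → v ∈ P₂.support → v = a ∨ v = b) ∧
    (∀ v, v ∈ P₁.support → v ∈ P₃.support → v = a ∨ v = b) ∧
    (∀ v, v ∈ P₂.support → v ∈ P₃.support → v = a ∨ v = b) ∧
    IsHole G (supp P₁ ∪ supp P₂) ∧
    IsHole G (supp P₁ ∪ supp P₃) ∧
    IsHole G (supp P₂ ∪ supp P₃)

/-- `G` contains a pyramid as an induced subgraph. -/
def HasPyramid (G : SimpleGraph V) : Prop :=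
  ∃ (a b₁ b₂ b₃ : V) (P₁ : G.Walk a b₁) (P₂ : G.Walk a b₂) (P₃ : G.Walk a b₃),
    G.Adj b₁ b₂ ∧ G.Adj b₂ b₃ ∧ G.Adj b₁ b₃ ∧
    P₁.IsPath ∧ P₂.IsPath ∧ P₃.IsPath ∧
    (∀ v, v ∈ P₁.support → v ∈ P₂.support → v = a) ∧
    (∀ v, v ∈ P₁.support → v ∈ P₃.support → v = a) ∧
    (∀ v, v ∈ P₂.support → v ∈ P₃.support → v = a) ∧
    ¬ (P₁.length = 1 ∧ P₂.length = 1) ∧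
    ¬ (P₁.length = 1 ∧ P₃.length = 1) ∧
    ¬ (P₂.length = 1 ∧ P₃.length = 1) ∧
    IsHole G (supp P₁ ∪ supp P₂) ∧
    IsHole G (supp P₁ ∪ supp P₃) ∧
    IsHole G (supp P₂ ∪ supp P₃)

/-- `G` contains a prism as an induced subgraph. -/
def HasPrism (G : SimpleGraph V) : Prop :=
  ∃ (a₁ a₂ a₃ b₁ b₂ b₃ : V) (P₁ : G.Walk a₁ b₁) (P₂ : G.Walk a₂ b₂)
      (P₃ : G.Walk a₃ b₃),
    G.Adj a₁ a₂ ∧ G.Adj a₂ a₃ ∧ G.Adj a₁ a₃ ∧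
    G.Adj b₁ b₂ ∧ G.Adj b₂ b₃ ∧ G.Adj b₁ b₃ ∧
    P₁.IsPath ∧ P₂.IsPath ∧ P₃.IsPath ∧
    (∀ v, v ∈ P₁.support → v ∉ P₂.support) ∧
    (∀ v, v ∈ P₁.support → v ∉ P₃.support) ∧
    (∀ v, v ∈ P₂.support → v ∉ P₃.support) ∧
    IsHole G (supp P₁ ∪ supp P₂) ∧
    IsHole G (supp P₁ ∪ supp P₃) ∧
    IsHole G (supp P₂ ∪ supp P₃)

/-- `G` contains a turtle as an induced subgraph. -/
def HasTurtle (G : SimpleGraph V) : Prop :=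
  ∃ (a₁ b₁ a₂ b₂ x y : V) (P₁ : G.Walk a₁ b₁) (P₂ : G.Walk a₂ b₂),
    P₁.IsPath ∧ P₂.IsPath ∧
    (∀ v, v ∈ P₁.support → v ∉ P₂.support) ∧
    G.Adj a₁ a₂ ∧ G.Adj b₁ b₂ ∧ G.Adj x y ∧
    x ∉ P₁.support ∧ x ∉ P₂.support ∧ y ∉ P₁.support ∧ y ∉ P₂.support ∧
    IsHole G (supp P₁ ∪ supp P₂) ∧
    3 ≤ (nbrsIn G x (supp P₁)).ncard ∧
    (∀ v ∈ P₂.support, ¬ G.Adj x v) ∧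
    3 ≤ (nbrsIn G y (supp P₂)).ncard ∧
    (∀ v ∈ P₁.support, ¬ G.Adj y v)

/-- `G` contains no theta, pyramid, prism, or turtle as an induced subgraph. -/
def TPPTFree (G : SimpleGraph V) : Prop :=
  ¬ HasTheta G ∧ ¬ HasPyramid G ∧ ¬ HasPrism G ∧ ¬ HasTurtle G

/-- The neighborhood of a set `X`: all vertices outside `X` with a neighbor in `X`. -/
def setNbrs (G : SimpleGraph V) (X : Set V) : Set V :=
  {v | v ∉ X ∧ ∃ x ∈ X, G.Adj x v}

/-- `A` is a connected component of `G ∖ C`. -/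
def IsCompOf (G : SimpleGraph V) (C A : Set V) : Prop :=
  A.Nonempty ∧ Disjoint A C ∧ (G.induce A).Connected ∧
    ∀ a ∈ A, ∀ b : V, G.Adj a b → b ∉ C → b ∈ A

/-- `C` is a minimal separator of `G`: there are two distinct components `L`, `R`
of `G ∖ C` with `N(L) = N(R) = C`. -/
def IsMinSep (G : SimpleGraph V) (C : Set V) : Prop :=
  ∃ L R : Set V, IsCompOf G C L ∧ IsCompOf G C R ∧ L ≠ R ∧
    setNbrs G L = C ∧ setNbrs G R = C

/-- A proper separator: a minimal separator that is not a clique. -/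
def IsProperSep (G : SimpleGraph V) (C : Set V) : Prop :=
  IsMinSep G C ∧ ¬ (∀ a ∈ C, ∀ b ∈ C, a ≠ b → G.Adj a b)

/-- `u` is a minor vertex for the hole `H`: `u ∉ H`, `u` has a neighbor in `H` and
all its neighbors in `H` lie in a path of `H` with at most three vertices. -/
def IsMinorFor (G : SimpleGraph V) (u : V) (H : Set V) : Prop :=
  u ∉ H ∧ (nbrsIn G u H).Nonempty ∧
    ∃ a b c : V, a ∈ H ∧ b ∈ H ∧ c ∈ H ∧ G.Adj a b ∧ G.Adj b c ∧ a ≠ c ∧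
      nbrsIn G u H ⊆ {a, b, c}

/-- `u` is a major vertex for the hole `H`. -/
def IsMajorFor (G : SimpleGraph V) (u : V) (H : Set V) : Prop :=
  u ∉ H ∧ (nbrsIn G u H).Nonempty ∧ ¬ IsMinorFor G u H

/-- `u` is a pendant of `H`: it has a unique neighbor in `H`. -/
def IsPendant (G : SimpleGraph V) (u : V) (H : Set V) : Prop :=
  u ∉ H ∧ ∃ a : V, nbrsIn G u H = {a}

/-- `u` is a cap of `H`: it has exactly two neighbors in `H` and they are adjacent. -/
def IsCap (G : SimpleGraph V) (u : V) (H : Set V) : Prop :=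
  u ∉ H ∧ ∃ a b : V, a ≠ b ∧ G.Adj a b ∧ nbrsIn G u H = {a, b}

/-- `u` is a clone of `y` in `H`: its neighbors in `H` are exactly the three
vertices of a path `x-y-z` of `H`. -/
def IsCloneOf (G : SimpleGraph V) (u y : V) (H : Set V) : Prop :=
  u ∉ H ∧ ∃ x z : V, x ∈ H ∧ y ∈ H ∧ z ∈ H ∧ G.Adj x y ∧ G.Adj y z ∧ x ≠ z ∧
    nbrsIn G u H = {x, y, z}

/-- `u` is a clone (of some vertex) in `H`. -/
def IsClone (G : SimpleGraph V) (u : V) (H : Set V) : Prop :=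
  ∃ y, IsCloneOf G u y H

/-- `P` is a `u`-sector of the hole `H`: a path contained in `H` whose ends are
neighbors of `u` and whose interior is anticomplete to `u`. -/
def IsSector (G : SimpleGraph V) (u : V) (H : Set V) {a b : V} (P : G.Walk a b) : Prop :=
  P.IsPath ∧ (∀ v ∈ P.support, v ∈ H) ∧ G.Adj u a ∧ G.Adj u b ∧
    ∀ v ∈ P.support, v ≠ a → v ≠ b → ¬ G.Adj u v

/-- `u` and `v` are nested with respect to the hole `H`: there are distinct
`a, b ∈ H` such that one `ab`-path of `H` contains all neighbors of `u` in `H`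
and the other `ab`-path of `H` contains all neighbors of `v` in `H`. -/
def Nested (G : SimpleGraph V) (u v : V) (H : Set V) : Prop :=
  ∃ a b : V, a ∈ H ∧ b ∈ H ∧ a ≠ b ∧
    ∃ (P Q : G.Walk a b), P.IsPath ∧ Q.IsPath ∧
      supp P ∪ supp Q = H ∧
      (∀ x, x ∈ P.support → x ∈ Q.support → x = a ∨ x = b) ∧
      (∀ x ∈ H, G.Adj u x → x ∈ P.support) ∧
      (∀ x ∈ H, G.Adj v x → x ∈ Q.support)

/-- `u` is a hub for the hole `H`: its neighbors in `H` are exactly four vertices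
`p, q, r, s` appearing in that order along `H`, with `pq, rs ∈ E(G)` and
`ps, qr ∉ E(G)`. -/
def IsHub (G : SimpleGraph V) (u : V) (H : Set V) : Prop :=
  u ∉ H ∧ ∃ (p q r s : V) (A : G.Walk q r) (B : G.Walk s p),
    p ≠ q ∧ p ≠ r ∧ p ≠ s ∧ q ≠ r ∧ q ≠ s ∧ r ≠ s ∧
    nbrsIn G u H = {p, q, r, s} ∧
    G.Adj p q ∧ G.Adj r s ∧ ¬ G.Adj p s ∧ ¬ G.Adj q r ∧
    A.IsPath ∧ B.IsPath ∧
    (∀ v, v ∈ A.support → v ∉ B.support) ∧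
    supp A ∪ supp B = H

/-- `N` is an extended neighborhood of `w` in the hole `H`. -/
def IsExtNbhd (G : SimpleGraph V) (w : V) (H N : Set V) : Prop :=
  ∃ (x y x' y' : V) (Q : G.Walk x y),
    IsSector G w H Q ∧
    x' ∈ H ∧ x' ∉ Q.support ∧ G.Adj x' x ∧
    y' ∈ H ∧ y' ∉ Q.support ∧ G.Adj y' y ∧
    N = supp Q ∪ ({x', y'} ∩ nbrsIn G w H)

/-- `a` and `b` are distant in `H` with respect to `w`: no extended neighborhood
of `w` in `H` contains both `a` and `b`. -/
def Distant (G : SimpleGraph V) (w : V) (H : Set V) (a b : V) : Prop :=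
  a ∈ H ∧ b ∈ H ∧ ∀ N : Set V, IsExtNbhd G w H N → ¬ (a ∈ N ∧ b ∈ N)

/-- `P` is an `(H, w)`-significant path. -/
def IsSignificant (G : SimpleGraph V) (w : V) (H : Set V) {p q : V}
    (P : G.Walk p q) : Prop :=
  P.IsPath ∧ ∃ a b : V, a ∈ H ∧ G.Adj p a ∧ ¬ G.Adj w a ∧ b ∈ H ∧ G.Adj q b ∧
    Distant G w H a b

/-- `v` is a gem-center for the hole `H`. -/
def IsGemCenter (G : SimpleGraph V) (v : V) (H : Set V) : Prop :=
  5 ≤ H.ncard ∧ ∃ h₁ h₂ h₃ h₄ : V, h₁ ∈ H ∧ h₂ ∈ H ∧ h₃ ∈ H ∧ h₄ ∈ H ∧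
    G.Adj h₁ h₂ ∧ G.Adj h₂ h₃ ∧ G.Adj h₃ h₄ ∧ h₁ ≠ h₃ ∧ h₁ ≠ h₄ ∧ h₂ ≠ h₄ ∧
    nbrsIn G v H = {h₁, h₂, h₃, h₄}

/-- `x` is the center of a star cutset of `G`. -/
def IsStarCutsetCenter (G : SimpleGraph V) (x : V) : Prop :=
  ∃ X : Set V, x ∈ X ∧ (∀ y ∈ X, y ≠ x → G.Adj x y) ∧
    ¬ (G.induce (Xᶜ)).Preconnected

/-- `v` is `(c₁, c₂)`-heavy with respect to the hole `H`. -/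
def IsHeavy (G : SimpleGraph V) (c₁ c₂ : V) (H : Set V) (v : V) : Prop :=
  IsMajorFor G v H ∧ Distant G v H c₁ c₂

/-- The pair of paths `HL`, `HR` forms a `(C, c₁, c₂)`-hole with frame
`(c₁, c₂, ℓ₁', ℓ₁, r₁, r₁', ℓ₂', ℓ₂, r₂, r₂')`, where `L` and `R` are the two
full components of the proper separator `C`. -/
def IsCHoleWithFrame (G : SimpleGraph V) (C L R : Set V)
    (c₁ c₂ ℓ₁ ℓ₁' ℓ₂ ℓ₂' r₁ r₁' r₂ r₂' : V) (HL HR : G.Walk c₁ c₂) : Prop :=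
  HL.IsPath ∧ HR.IsPath ∧
  (∀ v, v ∈ HL.support → v ∈ HR.support → v = c₁ ∨ v = c₂) ∧
  IsHole G (supp HL ∪ supp HR) ∧
  c₁ ∈ C ∧ c₂ ∈ C ∧
  (∀ v, v ∈ HL.support → v ≠ c₁ → v ≠ c₂ → v ∈ L) ∧
  (∀ v, v ∈ HR.support → v ≠ c₁ → v ≠ c₂ → v ∈ R) ∧
  (supp HL ∪ supp HR) ∩ C = {c₁, c₂} ∧
  ℓ₁ ∈ HL.support ∧ ℓ₁ ≠ c₂ ∧ G.Adj c₁ ℓ₁ ∧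
  ℓ₂ ∈ HL.support ∧ ℓ₂ ≠ c₁ ∧ G.Adj c₂ ℓ₂ ∧
  r₁ ∈ HR.support ∧ r₁ ≠ c₂ ∧ G.Adj c₁ r₁ ∧
  r₂ ∈ HR.support ∧ r₂ ≠ c₁ ∧ G.Adj c₂ r₂ ∧
  ((ℓ₁ = ℓ₂ ∧ ℓ₁' = ℓ₁) ∨
    (ℓ₁ ≠ ℓ₂ ∧ ℓ₁' ∈ HL.support ∧ ℓ₁' ≠ c₁ ∧ ℓ₁' ≠ c₂ ∧ G.Adj ℓ₁ ℓ₁')) ∧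
  ((ℓ₁ = ℓ₂ ∧ ℓ₂' = ℓ₂) ∨
    (ℓ₁ ≠ ℓ₂ ∧ ℓ₂' ∈ HL.support ∧ ℓ₂' ≠ c₁ ∧ ℓ₂' ≠ c₂ ∧ G.Adj ℓ₂ ℓ₂')) ∧
  ((r₁ = r₂ ∧ r₁' = r₁) ∨
    (r₁ ≠ r₂ ∧ r₁' ∈ HR.support ∧ r₁' ≠ c₁ ∧ r₁' ≠ c₂ ∧ G.Adj r₁ r₁')) ∧
  ((r₁ = r₂ ∧ r₂' = r₂) ∨
    (r₁ ≠ r₂ ∧ r₂' ∈ HR.support ∧ r₂' ≠ c₁ ∧ r₂' ≠ c₂ ∧ G.Adj r₂ r₂'))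

/-- The 3-dimensional hypercube graph: vertices are elements of `{0,1}³`, two
vertices being adjacent exactly when they differ in one coordinate. -/
def cubeGraph : SimpleGraph (Fin 3 → Bool) where
  Adj x y := ∃! i, x i ≠ y i
  symm := by
    constructor
    rintro x y ⟨i, hi, hj⟩
    exact ⟨i, Ne.symm hi, fun j h => hj j (Ne.symm h)⟩
  loopless := by
    constructor
    rintro x ⟨i, hi, -⟩
    exact hi rfl

/-! A full component `A` of `G ∖ C` dominates `C`; a minimal dominating set `S ⊆ A` of `C` gives
every vertex of `S` a private neighbour in `C`, and these pairs form an induced matching, i.e. an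
immature `|S|`-creature. So `C` is dominated by fewer than `k` vertices of each of two distinct
full components `L` and `R`, and `C` is exactly the set of common neighbours of these two small
dominating sets (a common neighbour outside `C` would join `L` to `R`). Hence `C` is determined by
a pair of sets of size less than `k`, of which there are at most `(k · n^(k-1))²`. -/

/-- `x` and `y` enumerate the sides `X` and `Y` of an induced immature `k`-creature. -/
def IsImmatureCreature (G : SimpleGraph V) {k : ℕ} (x y : Fin k → V) : Prop :=
  Function.Injective x ∧ Function.Injective y ∧ (∀ i j, x i ≠ y j) ∧
    ∀ i j, (G.Adj (x i) (y j) ↔ i = j)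

section MinimalSeparators

variable {G : SimpleGraph V}

theorem IsCompOf.subset_of_mem {C A B : Set V} (hA : IsCompOf G C A) (hB : IsCompOf G C B)
    {v : V} (hvA : v ∈ A) (hvB : v ∈ B) : A ⊆ B := by
  have walk_mem : ∀ {a b : A} (p : (G.induce A).Walk a b), (a : V) ∈ B → (b : V) ∈ B := by
    intro a b p
    induction p with
    | nil => exact id
    | cons hadj _ ih =>
      exact fun ha => ih (hB.2.2.2 _ ha _ hadj (Set.disjoint_left.mp hA.2.1 (Subtype.prop _)))
  intro a ha
  exact walk_mem (hA.2.2.1.preconnected ⟨v, hvA⟩ ⟨a, ha⟩).some hvB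

theorem IsCompOf.eq_of_mem {C A B : Set V} (hA : IsCompOf G C A) (hB : IsCompOf G C B)
    {v : V} (hvA : v ∈ A) (hvB : v ∈ B) : A = B :=
  (hA.subset_of_mem hB hvA hvB).antisymm (hB.subset_of_mem hA hvB hvA)

theorem eq_inter_of_dominated_from_two_components {C L R : Set V} (hL : IsCompOf G C L)
    (hR : IsCompOf G C R) (hLR : L ≠ R) {S T : Finset V} (hSL : ↑S ⊆ L) (hTR : ↑T ⊆ R)
    (hSC : C ⊆ ⋃ x ∈ S, G.neighborSet x) (hTC : C ⊆ ⋃ y ∈ T, G.neighborSet y) :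
    C = (⋃ x ∈ S, G.neighborSet x) ∩ ⋃ y ∈ T, G.neighborSet y := by
  refine (Set.subset_inter hSC hTC).antisymm ?_
  rintro v ⟨hvS, hvT⟩
  simp only [Set.mem_iUnion, mem_neighborSet, exists_prop] at hvS hvT
  obtain ⟨x, hxS, hxv⟩ := hvS
  obtain ⟨y, hyT, hyv⟩ := hvT
  by_contra hvC
  exact hLR (hL.eq_of_mem hR (hL.2.2.2 x (hSL hxS) v hxv hvC) (hR.2.2.2 y (hTR hyT) v hyv hvC))

theorem exists_immatureCreature_of_privateNeighbors {S : Finset V} {C : Set V}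
    (hSC : Disjoint (↑S : Set V) C)
    (hpriv : ∀ s ∈ S, ∃ c ∈ C, G.Adj s c ∧ ∀ t ∈ S, G.Adj t c → t = s)
    {k : ℕ} (hk : k ≤ S.card) : ∃ x y : Fin k → V, IsImmatureCreature G x y := by
  let x : Fin k → S := S.equivFin.symm ∘ Fin.castLE hk
  have hx : Function.Injective x := S.equivFin.symm.injective.comp (Fin.castLE_injective hk)
  choose y hyC hxy hyPriv using fun i => hpriv (x i) (x i).2
  have adj_iff : ∀ i j, G.Adj (x i) (y j) ↔ i = j := fun i j =>
    ⟨fun h => hx (Subtype.ext (hyPriv j _ (x i).2 h)), fun h => h ▸ hxy i⟩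
  refine ⟨fun i => x i, y, Subtype.val_injective.comp hx, ?_, ?_, adj_iff⟩
  · intro i j hij
    exact (adj_iff i j).mp (hij ▸ hxy i)
  · intro i j (hij : (x i : V) = y j)
    exact Set.disjoint_left.mp hSC (x i).2 (by rw [hij]; exact hyC j)

theorem exists_dominating_card_lt {k : ℕ} (hG : ¬ ∃ x y : Fin k → V, IsImmatureCreature G x y)
    {S₀ : Finset V} {C : Set V} (hS₀C : Disjoint (↑S₀ : Set V) C)
    (hS₀ : C ⊆ ⋃ x ∈ S₀, G.neighborSet x) :
    ∃ S ⊆ S₀, S.card < k ∧ C ⊆ ⋃ x ∈ S, G.neighborSet x := by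
  classical
  obtain ⟨S, hS, hmin⟩ := (S₀.powerset.filter fun S => C ⊆ ⋃ x ∈ S, G.neighborSet x)
    |>.exists_min_image Finset.card ⟨S₀, by simpa using hS₀⟩
  rw [Finset.mem_filter, Finset.mem_powerset] at hS
  refine ⟨S, hS.1, not_le.mp fun hk => hG ?_, hS.2⟩
  refine exists_immatureCreature_of_privateNeighbors
    (hS₀C.mono_left (Finset.coe_subset.mpr hS.1)) (fun s hs => ?_) hk
  have hnot : ¬ C ⊆ ⋃ x ∈ S.erase s, G.neighborSet x := fun h =>
    (Finset.card_erase_lt_of_mem hs).not_ge <| hmin _ <| Finset.mem_filter.mpr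
      ⟨Finset.mem_powerset.mpr ((S.erase_subset s).trans hS.1), h⟩
  obtain ⟨c, hcC, hc⟩ := Set.not_subset.mp hnot
  simp only [Set.mem_iUnion, mem_neighborSet, exists_prop, Finset.mem_erase, not_exists,
    not_and] at hc
  obtain ⟨x, hxS, hxc⟩ : ∃ x ∈ S, G.Adj x c := by simpa using hS.2 hcC
  obtain rfl : x = s := by_contra fun hxs => hc x ⟨hxs, hxS⟩ hxc
  exact ⟨c, hcC, hxc, fun t ht htc => by_contra fun hts => hc t ⟨hts, ht⟩ htc⟩

theorem exists_subset_card_lt_dominating_setNbrs [Finite V] {k : ℕ}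
    (hG : ¬ ∃ x y : Fin k → V, IsImmatureCreature G x y) (A : Set V) :
    ∃ S : Finset V, ↑S ⊆ A ∧ S.card < k ∧ setNbrs G A ⊆ ⋃ x ∈ S, G.neighborSet x := by
  have hdisj : Disjoint (↑A.toFinite.toFinset : Set V) (setNbrs G A) := by
    rw [Set.Finite.coe_toFinset]
    exact Set.disjoint_right.mpr fun _ hv => hv.1
  have hdom : setNbrs G A ⊆ ⋃ x ∈ A.toFinite.toFinset, G.neighborSet x := by
    rintro v ⟨-, a, ha, hav⟩
    exact Set.mem_biUnion (by simpa using ha) hav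
  obtain ⟨S, hSA, hSk, hSC⟩ := exists_dominating_card_lt hG hdisj hdom
  exact ⟨S, fun v hv => by simpa using hSA hv, hSk, hSC⟩

theorem IsMinSep.exists_eq_inter_of_card_lt [Finite V] {k : ℕ}
    (hG : ¬ ∃ x y : Fin k → V, IsImmatureCreature G x y) {C : Set V} (hC : IsMinSep G C) :
    ∃ S T : Finset V, S.card < k ∧ T.card < k ∧
      C = (⋃ x ∈ S, G.neighborSet x) ∩ ⋃ y ∈ T, G.neighborSet y := by
  obtain ⟨L, R, hL, hR, hLR, hNL, hNR⟩ := hC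
  obtain ⟨S, hSL, hSk, hSC⟩ := exists_subset_card_lt_dominating_setNbrs hG L
  obtain ⟨T, hTR, hTk, hTC⟩ := exists_subset_card_lt_dominating_setNbrs hG R
  rw [hNL] at hSC
  rw [hNR] at hTC
  exact ⟨S, T, hSk, hTk, eq_inter_of_dominated_from_two_components hL hR hLR hSL hTR hSC hTC⟩

end MinimalSeparators

theorem card_univ_filter_card_lt_le {α : Type*} [Fintype α] [Nonempty α] (k : ℕ) :
    (Finset.univ.filter fun S : Finset α => S.card < k).card ≤ k * Fintype.card α ^ (k - 1) := by
  classical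
  have hunion : (Finset.univ.filter fun S : Finset α => S.card < k) =
      (Finset.range k).biUnion fun j => Finset.powersetCard j Finset.univ := by
    ext S
    simp
  calc (Finset.univ.filter fun S : Finset α => S.card < k).card
      ≤ ∑ j ∈ Finset.range k, (Finset.powersetCard j (Finset.univ : Finset α)).card :=
        hunion ▸ Finset.card_biUnion_le
    _ ≤ ∑ _j ∈ Finset.range k, Fintype.card α ^ (k - 1) := by
        refine Finset.sum_le_sum fun j hj => ?_
        rw [Finset.card_powersetCard, Finset.card_univ]
        exact (Nat.choose_le_pow _ _).trans
          (Nat.pow_le_pow_right Fintype.card_pos (by simp at hj; omega))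
    _ = k * Fintype.card α ^ (k - 1) := by simp

theorem minSep_bound_of_no_immature_creature_general {V : Type*} [Fintype V]
    (G : SimpleGraph V) (k : ℕ)
    (h : ¬ ∃ x y : Fin k → V, Function.Injective x ∧ Function.Injective y ∧
        (∀ i j, x i ≠ y j) ∧ ∀ i j, (G.Adj (x i) (y j) ↔ i = j)) :
    {C : Set V | IsMinSep G C}.ncard ≤ k ^ 2 * Fintype.card V ^ (2 * k - 2) := by
  classical
  cases isEmpty_or_nonempty V with
  | inl hV =>
    have hnone : {C : Set V | IsMinSep G C} = ∅ :=
      Set.eq_empty_of_forall_notMem fun _ ⟨_, _, hL, _⟩ => isEmptyElim hL.1.some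
    simp [hnone]
  | inr hV =>
    let small := Finset.univ.filter fun S : Finset V => S.card < k
    let commonNbrs : Finset V × Finset V → Set V := fun p =>
      (⋃ x ∈ p.1, G.neighborSet x) ∩ ⋃ y ∈ p.2, G.neighborSet y
    have hsub : {C : Set V | IsMinSep G C} ⊆ ↑((small ×ˢ small).image commonNbrs) := by
      intro C hC
      obtain ⟨S, T, hS, hT, rfl⟩ := IsMinSep.exists_eq_inter_of_card_lt h hC
      exact Finset.mem_coe.mpr (Finset.mem_image.mpr ⟨(S, T), by simp [small, hS, hT], rfl⟩)
    calc {C : Set V | IsMinSep G C}.ncard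
        ≤ ((small ×ˢ small).image commonNbrs).card :=
          (Set.ncard_le_ncard hsub).trans_eq (Set.ncard_coe_finset _)
      _ ≤ small.card ^ 2 := by
          rw [sq, ← Finset.card_product]; exact Finset.card_image_le
      _ ≤ (k * Fintype.card V ^ (k - 1)) ^ 2 :=
          Nat.pow_le_pow_left (card_univ_filter_card_lt_le k) 2
      _ = k ^ 2 * Fintype.card V ^ (2 * k - 2) := by
          rw [mul_pow, ← pow_mul]; congr 2; omega

/-- If `k ≥ 1` and no induced subgraph of the finite simple graph `G` is an
immature `k`-creature, then `G` has at most `k² · n^(2k-2)` minimal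
separators, where `n = |V(G)|`. -/
theorem minSep_bound_of_no_immature_creature {V : Type*} [Fintype V]
    (G : SimpleGraph V) (k : ℕ) (hk : 1 ≤ k)
    (h : ¬ ∃ x y : Fin k → V, Function.Injective x ∧ Function.Injective y ∧
        (∀ i j, x i ≠ y j) ∧ ∀ i j, (G.Adj (x i) (y j) ↔ i = j)) :
    {C : Set V | IsMinSep G C}.ncard ≤ k ^ 2 * Fintype.card V ^ (2 * k - 2) :=
  minSep_bound_of_no_immature_creature_general G k h

end Paper
end

section
/- Let G be a finite simple graph containing no theta, pyramid, prism, or turtle as an induced subgraph, and let H be a hole in G. Then every major vertex u for H has at least four neighbors in H, or has exactly three neighbors in H that are pairwise nonadjacent. -/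
namespace SimpleGraph.Walk

variable {V : Type*} {G : SimpleGraph V} {x y z v : V}

lemma two_le_length_of_not_adj (p : G.Walk x y) (hne : x ≠ y) (hxy : ¬ G.Adj x y) :
    2 ≤ p.length := by
  by_contra! h
  interval_cases hp : p.length
  · exact hne (eq_of_length_eq_zero hp)
  · exact hxy (adj_of_length_eq_one hp)

lemma IsChordless.reverse {p : G.Walk x y} (hp : p.IsChordless) : p.reverse.IsChordless :=
  isChordless_iff_forall_mem_edges.mpr fun _ _ hv hw hvw => by
    simpa using hp.mem_edges (by simpa using hv) (by simpa using hw) hvw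

lemma IsChordless.of_cons {h : G.Adj x y} {p : G.Walk y z} (hpath : (cons h p).IsPath)
    (hp : (cons h p).IsChordless) : p.IsChordless := by
  refine isChordless_iff_forall_mem_edges.mpr fun v w hv hw hvw => ?_
  have hx : x ∉ p.support := ((cons_isPath_iff h p).mp hpath).2
  rcases List.mem_cons.mp (hp.mem_edges (by simp [hv]) (by simp [hw]) hvw) with h | h
  · rcases Sym2.eq_iff.mp h with ⟨rfl, -⟩ | ⟨-, rfl⟩
    · exact absurd hv hx
    · exact absurd hw hx
  · exact h

lemma IsChordless.exists_eq_cons {p : G.Walk x y} (hp : p.IsPath) (hch : p.IsChordless)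
    (hz : z ∈ p.support) (hxz : G.Adj x z) : ∃ q : G.Walk z y, p = cons hxz q := by
  cases p with
  | nil => exact absurd (by simpa using hz : z = x).symm hxz.ne
  | cons h q =>
    have hz : z = _ := hp.eq_snd_of_mem_edges (hch.mem_edges (start_mem_support _) hz hxz)
    rw [snd_cons] at hz
    subst hz
    exact ⟨q, rfl⟩

lemma IsCycle.eq_or_eq_of_mem_support_append {p : G.Walk x y} {q : G.Walk y x}
    (hc : (p.append q).IsCycle) (hvp : v ∈ p.support) (hvq : v ∈ q.support) :
    v = x ∨ v = y := by
  have hnodup := hc.support_nodup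
  rw [tail_support_append] at hnodup
  by_contra! hv
  rw [← cons_tail_support] at hvp hvq
  exact List.disjoint_of_nodup_append hnodup ((List.mem_cons.mp hvp).resolve_left hv.1)
    ((List.mem_cons.mp hvq).resolve_left hv.2)

lemma IsChordless.of_append_left {p : G.Walk x y} {q : G.Walk y x}
    (hc : (p.append q).IsCycle) (hch : (p.append q).IsChordless) (hxy : ¬ G.Adj x y) :
    p.IsChordless := by
  refine isChordless_iff_forall_mem_edges.mpr fun v w hv hw hvw => ?_
  have := hch.mem_edges (by simp [hv]) (by simp [hw]) hvw
  rw [edges_append, List.mem_append] at this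
  refine this.resolve_right fun hq => ?_
  rcases hc.eq_or_eq_of_mem_support_append hv (fst_mem_support_of_mem_edges q hq) with rfl | rfl <;>
  rcases hc.eq_or_eq_of_mem_support_append hw (snd_mem_support_of_mem_edges q hq) with rfl | rfl
  · exact hvw.ne rfl
  · exact hxy hvw
  · exact hxy hvw.symm
  · exact hvw.ne rfl

lemma IsChordless.of_append_right {p : G.Walk x y} {q : G.Walk y x}
    (hc : (p.append q).IsCycle) (hch : (p.append q).IsChordless) (hxy : ¬ G.Adj x y) :
    q.IsChordless := by
  rw [← isCycle_reverse, reverse_append] at hc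
  have hch' : (q.reverse.append p.reverse).IsChordless := by
    rw [← reverse_append]; exact hch.reverse
  simpa using (hch'.of_append_left hc hxy).reverse

end SimpleGraph.Walk

namespace Paper

open SimpleGraph Walk

variable {V : Type*} {G : SimpleGraph V}

lemma supp_append {x y z : V} (p : G.Walk x y) (q : G.Walk y z) :
    supp (p.append q) = supp p ∪ supp q := by
  ext; simp [supp]

lemma supp_reverse {x y : V} (p : G.Walk x y) : supp p.reverse = supp p := by
  ext; simp [supp]

lemma ncard_supp_of_isCycle {x : V} {W : G.Walk x x} (hW : W.IsCycle) :
    (supp W).ncard = W.length := by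
  classical
  have h : supp W = ↑W.support.tail.toFinset := by
    ext v
    simp only [supp, Set.mem_ofPred_eq, Finset.mem_coe, List.mem_toFinset]
    refine ⟨fun hv => ?_, List.mem_of_mem_tail⟩
    rcases (W.mem_support_iff).mp hv with rfl | hv
    exacts [end_mem_tail_support hW.not_nil, hv]
  rw [h, Set.ncard_coe_finset, List.toFinset_card_of_nodup hW.support_nodup, List.length_tail,
    length_support, Nat.add_sub_cancel]

lemma isChordless_iff_ncard_nbrsIn {x : V} {W : G.Walk x x} (hW : W.IsCycle) :
    W.IsChordless ↔ ∀ v ∈ W.support, (nbrsIn G v (supp W)).ncard = 2 := by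
  have hsub : ∀ v, W.toSubgraph.neighborSet v ⊆ nbrsIn G v (supp W) := fun v w hw =>
    ⟨mem_support_of_adj_toSubgraph hw.symm, hw.adj_sub⟩
  constructor
  · intro hch v hv
    rw [← hW.ncard_neighborSet_toSubgraph_eq_two hv]
    refine congrArg _ (Set.Subset.antisymm (fun w hw => ?_) (hsub v))
    exact adj_toSubgraph_iff_mem_edges.mpr (hch.mem_edges hv hw.1 hw.2)
  · refine fun hdeg => isChordless_iff_forall_mem_edges.mpr fun v w hv hw hvw => ?_
    have heq := Set.eq_of_subset_of_ncard_le (hsub v)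
      (by rw [hdeg v hv, hW.ncard_neighborSet_toSubgraph_eq_two hv])
      (W.support.finite_toSet.subset fun _ h => h.1)
    have hw' : w ∈ W.toSubgraph.neighborSet v := heq.symm ▸ ⟨hw, hvw⟩
    exact adj_toSubgraph_iff_mem_edges.mp hw'

lemma isHole_supp_of_isCycle {x : V} {W : G.Walk x x} (hW : W.IsCycle) (hch : W.IsChordless)
    (hlen : 4 ≤ W.length) : IsHole G (supp W) :=
  ⟨W.support.finite_toSet, ncard_supp_of_isCycle hW ▸ hlen, W.connected_induce_support,
    (isChordless_iff_ncard_nbrsIn hW).mp hch⟩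

lemma ncard_neighborSet_induce (H : Set V) (v : H) :
    ((G.induce H).neighborSet v).ncard = (nbrsIn G v H).ncard := by
  rw [← Set.ncard_image_of_injective _ Subtype.val_injective]
  congr 1
  ext w
  simp [nbrsIn, and_comm]

lemma IsHole.exists_isCycle {H : Set V} (hH : IsHole G H) {x : V} (hx : x ∈ H) :
    ∃ W : G.Walk x x, W.IsCycle ∧ W.IsChordless ∧ supp W = H := by
  -- `G[H]` is connected and 2-regular, so it is a single cycle.
  have : Finite H := hH.1.to_subtype
  have hcyc : (G.induce H).IsCycles := fun v _ => by
    rw [ncard_neighborSet_induce]; exact hH.2.2.2 v v.2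
  obtain ⟨p, hp, hverts⟩ := hcyc.exists_cycle_toSubgraph_verts_eq_connectedComponentSupp
    (c := (G.induce H).connectedComponentMk ⟨x, hx⟩) rfl
    (Set.nonempty_of_ncard_ne_zero (by rw [ncard_neighborSet_induce, hH.2.2.2 x hx]; simp))
  let W := p.map (Embedding.induce H).toHom
  have hW : W.IsCycle := (isCycle_map_iff_of_injective Subtype.val_injective).mpr hp
  have hWH : supp W = H := by
    have hall : ∀ a : H, a ∈ p.support := fun a => by
      rw [← mem_verts_toSubgraph, hverts, ConnectedComponent.mem_supp_iff,
        ConnectedComponent.eq]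
      exact hH.2.2.1.preconnected _ _
    ext v
    simp only [W, supp, Set.mem_ofPred_eq, Walk.support_map, List.mem_map]
    exact ⟨fun ⟨a, _, ha⟩ => ha ▸ a.2, fun hv => ⟨⟨v, hv⟩, hall _, rfl⟩⟩
  refine ⟨W, hW, (isChordless_iff_ncard_nbrsIn hW).mpr fun v hv => ?_, hWH⟩
  rw [hWH]
  exact hH.2.2.2 v (hWH ▸ hv)

lemma isHole_supp_union_singleton {x y u : V} {p : G.Walk x y} (hp : p.IsPath)
    (hch : p.IsChordless) (hlen : 2 ≤ p.length) (hu : u ∉ p.support) (hux : G.Adj u x)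
    (huy : G.Adj u y) (hnbr : ∀ w ∈ p.support, G.Adj u w → w = x ∨ w = y) :
    IsHole G (supp p ∪ {u}) := by
  have hxy : x ≠ y := by
    rintro rfl
    have := length_eq_zero_iff.mpr (isPath_iff_nil.mp hp)
    omega
  let C : G.Walk u u := cons hux (p.concat huy.symm)
  have hC : C.IsCycle := by
    refine (cons_isCycle_iff _ hux).mpr ⟨hp.concat hu huy.symm, fun h => ?_⟩
    simp only [edges_concat, List.concat_eq_append, List.mem_append, List.mem_singleton] at h
    rcases h with h | h
    · exact hu (fst_mem_support_of_mem_edges p h)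
    · rcases Sym2.eq_iff.mp h with ⟨rfl, -⟩ | ⟨-, rfl⟩
      exacts [hu p.end_mem_support, hxy rfl]
  have hCsupp : supp C = supp p ∪ {u} := by
    ext
    simp only [C, supp, support_cons, support_concat, List.mem_cons, List.mem_append,
      List.not_mem_nil, or_false, Set.mem_ofPred_eq, Set.union_singleton, Set.mem_insert_iff]
    tauto
  rw [← hCsupp]
  refine isHole_supp_of_isCycle hC (isChordless_iff_forall_mem_edges.mpr ?_)
    (by simp only [C, length_cons, length_concat]; omega)
  intro v w hv hw hvw
  have hmem : ∀ z ∈ C.support, z = u ∨ z ∈ p.support := by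
    intro z hz
    simp only [C, support_cons, support_concat, List.mem_cons,
      List.mem_append, List.not_mem_nil] at hz
    tauto
  rcases hmem v hv with rfl | hvp <;> rcases hmem w hw with rfl | hwp
  · exact absurd rfl hvw.ne
  · rcases hnbr w hwp hvw with rfl | rfl <;> simp [C]
  · rcases hnbr v hvp hvw.symm with rfl | rfl <;> simp [C]
  · simp [C, hch.mem_edges hvp hwp hvw]

lemma supp_union_supp_cons_nil {x y u : V} (p : G.Walk x y) (h : G.Adj x u) :
    supp p ∪ supp (cons h nil) = supp p ∪ {u} := by
  ext
  simp only [supp, support_cons, support_nil, Set.mem_union, Set.mem_ofPred_eq, List.mem_cons,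
    List.not_mem_nil, Set.mem_singleton_iff]
  grind [start_mem_support]

lemma supp_union_supp_cons_cons {x y u : V} (p : G.Walk x y) (hxu : G.Adj x u)
    (huy : G.Adj u y) : supp p ∪ supp (cons hxu (cons huy nil)) = supp p ∪ {u} := by
  ext
  simp only [supp, support_cons, support_nil, Set.mem_union, Set.mem_ofPred_eq, List.mem_cons,
    List.not_mem_nil, Set.mem_singleton_iff]
  grind [start_mem_support, end_mem_support]

lemma eq_of_mem_support_cons_nil {x u v : V} {h : G.Adj x u} (hv : v ∈ (cons h nil).support)
    (hvu : v ≠ u) : v = x := by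
  simpa [hvu] using hv

lemma eq_or_eq_of_mem_support_cons_cons {x y u v : V} {hxu : G.Adj x u} {huy : G.Adj u y}
    (hv : v ∈ (cons hxu (cons huy nil)).support) (hvu : v ≠ u) : v = x ∨ v = y := by
  simpa [hvu] using hv

lemma IsHole.exists_isCycle_append {H : Set V} (hH : IsHole G H) {a b : V} (ha : a ∈ H)
    (hb : b ∈ H) : ∃ (P : G.Walk a b) (R : G.Walk b a),
      (P.append R).IsCycle ∧ (P.append R).IsChordless ∧ supp P ∪ supp R = H := by
  obtain ⟨W, hW, hWch, hWH⟩ := hH.exists_isCycle ha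
  obtain ⟨P, R, rfl⟩ := mem_support_iff_exists_append.mp (show b ∈ supp W from hWH ▸ hb)
  exact ⟨P, R, hW, hWch, supp_append P R ▸ hWH⟩

lemma hasTheta_of_nbrsIn_eq_pair {H : Set V} (hH : IsHole G H) {u a b : V} (hu : u ∉ H)
    (hN : nbrsIn G u H = {a, b}) (hab : a ≠ b) (hnadj : ¬ G.Adj a b) : HasTheta G := by
  have ha : a ∈ nbrsIn G u H := hN ▸ Set.mem_insert _ _
  have hb : b ∈ nbrsIn G u H := hN ▸ Set.mem_insert_of_mem _ rfl
  have hnbr : ∀ v ∈ H, G.Adj u v → v = a ∨ v = b := fun v hv huv => by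
    have h : v ∈ nbrsIn G u H := ⟨hv, huv⟩
    rwa [hN] at h
  obtain ⟨P, R, hC, hCch, hCH⟩ := hH.exists_isCycle_append ha.1 hb.1
  have hPH : ∀ v ∈ P.support, v ∈ H := fun v hv => hCH ▸ Or.inl hv
  have hRH : ∀ v ∈ R.support, v ∈ H := fun v hv => hCH ▸ Or.inr hv
  have hP : P.IsPath := hC.isPath_of_append_left (not_nil_of_ne hab.symm)
  have hR : R.IsPath := hC.isPath_of_append_right (not_nil_of_ne hab)
  have hPlen := P.two_le_length_of_not_adj hab hnadj
  have hRlen := R.reverse.two_le_length_of_not_adj hab hnadj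
  have hholeP := isHole_supp_union_singleton hP (hCch.of_append_left hC hnadj) hPlen
    (fun h => hu (hPH _ h)) ha.2 hb.2 fun v hv => hnbr v (hPH v hv)
  have hholeR := isHole_supp_union_singleton hR.reverse (hCch.of_append_right hC hnadj).reverse
    hRlen (by simpa using fun h => hu (hRH _ h)) ha.2 hb.2
    fun v hv => hnbr v (hRH v (by simpa using hv))
  refine ⟨a, b, P, R.reverse, cons ha.2.symm (cons hb.2 nil), hab, hnadj, hP, hR.reverse,
    by simp [cons_isPath_iff, hab, ha.2.ne.symm, hb.2.ne], hPlen, hRlen, by simp,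
    fun v hvP hvR => hC.eq_or_eq_of_mem_support_append hvP (by simpa using hvR),
    fun v hvP hv => eq_or_eq_of_mem_support_cons_cons hv (ne_of_mem_of_not_mem (hPH v hvP) hu),
    fun v hvR hv => eq_or_eq_of_mem_support_cons_cons hv
      (ne_of_mem_of_not_mem (hRH v (by simpa using hvR)) hu),
    by rwa [supp_reverse, hCH], by rwa [supp_union_supp_cons_cons],
    by rwa [supp_union_supp_cons_cons]⟩

lemma IsHole.exists_isCycle_append_cons {H : Set V} (hH : IsHole G H) {a b c : V} (hc : c ∈ H)
    (ha : a ∈ H) (hb : b ∈ H) (hab : G.Adj a b) (hca : ¬ G.Adj c a) (hca' : c ≠ a) :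
    ∃ (P : G.Walk c a) (D : G.Walk b c), (P.append (cons hab D)).IsCycle ∧
      (P.append (cons hab D)).IsChordless ∧ supp P ∪ supp D = H := by
  obtain ⟨P, R, hC, hCch, hCH, hbR⟩ : ∃ (P : G.Walk c a) (R : G.Walk a c),
      (P.append R).IsCycle ∧ (P.append R).IsChordless ∧ supp P ∪ supp R = H ∧
        b ∈ R.support := by
    obtain ⟨P, R, hC, hCch, hCH⟩ := hH.exists_isCycle_append hc ha
    by_cases hbR : b ∈ R.support
    · exact ⟨P, R, hC, hCch, hCH, hbR⟩
    refine ⟨R.reverse, P.reverse, ?_, ?_,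
      by rwa [supp_reverse, supp_reverse, Set.union_comm], ?_⟩
    · rwa [← reverse_append, isCycle_reverse]
    · rw [← reverse_append]; exact hCch.reverse
    · have : b ∈ supp P ∪ supp R := hCH ▸ hb
      simpa [supp, hbR] using this
  -- the arc from `a` back to `c` is chordless, so it must leave `a` along the edge `ab`
  obtain ⟨D, rfl⟩ := (hCch.of_append_right hC hca).exists_eq_cons
    (hC.isPath_of_append_right (not_nil_of_ne hca')) hbR hab
  refine ⟨P, D, hC, hCch, hCH ▸ ?_⟩
  ext
  simp only [supp, support_cons, Set.mem_union, Set.mem_ofPred_eq, List.mem_cons]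
  grind [end_mem_support]

lemma hasPyramid_of_nbrsIn_eq_triple {H : Set V} (hH : IsHole G H) {u a b c : V} (hu : u ∉ H)
    (hN : nbrsIn G u H = {c, a, b}) (hab : G.Adj a b) (hca : ¬ G.Adj c a) (hbc : ¬ G.Adj b c)
    (hca' : c ≠ a) (hbc' : b ≠ c) : HasPyramid G := by
  have hc : c ∈ nbrsIn G u H := hN ▸ Set.mem_insert _ _
  have ha : a ∈ nbrsIn G u H := hN ▸ Set.mem_insert_of_mem _ (Set.mem_insert _ _)
  have hb : b ∈ nbrsIn G u H := hN ▸ Set.mem_insert_of_mem _ (Set.mem_insert_of_mem _ rfl)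
  have hnbr : ∀ v ∈ H, G.Adj u v → v = c ∨ v = a ∨ v = b := fun v hv huv => by
    have h : v ∈ nbrsIn G u H := ⟨hv, huv⟩
    rw [hN] at h
    simpa using h
  obtain ⟨P, D, hC, hCch, hCH⟩ :=
    hH.exists_isCycle_append_cons hc.1 ha.1 hb.1 hab hca hca'
  have hR : (cons hab D).IsPath := hC.isPath_of_append_right (not_nil_of_ne hca')
  have hD : D.IsPath := hR.of_cons
  have haD : a ∉ D.support := ((cons_isPath_iff _ _).mp hR).2
  have hP : P.IsPath := hC.isPath_of_append_left (not_nil_of_ne hca'.symm)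
  have hbP : b ∉ P.support := fun hbP => by
    rcases hC.eq_or_eq_of_mem_support_append hbP (start_mem_support D |> List.mem_cons_of_mem a)
      with h | h
    exacts [hbc' h, hab.ne h.symm]
  have hPH : ∀ v ∈ P.support, v ∈ H := fun v hv => hCH ▸ Or.inl hv
  have hDH : ∀ v ∈ D.support, v ∈ H := fun v hv => hCH ▸ Or.inr hv
  have hPlen := P.two_le_length_of_not_adj hca' hca
  have hDlen := D.two_le_length_of_not_adj hbc' hbc
  have hholeP := isHole_supp_union_singleton hP (hCch.of_append_left hC hca)
    hPlen (fun h => hu (hPH _ h)) hc.2 ha.2 fun v hv huv => by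
      rcases hnbr v (hPH v hv) huv with h | h | rfl
      exacts [Or.inl h, Or.inr h, absurd hv hbP]
  have hholeD := isHole_supp_union_singleton hD
    ((hCch.of_append_right hC hca).of_cons hR) hDlen (fun h => hu (hDH _ h))
    hb.2 hc.2 fun v hv huv => by
      rcases hnbr v (hDH v hv) huv with h | rfl | h
      exacts [Or.inr h, absurd hv haD, Or.inl h]
  refine ⟨c, a, b, u, P, D.reverse, cons hc.2.symm nil, hab, hb.2.symm, ha.2.symm, hP, hD.reverse,
    by simp [cons_isPath_iff, hc.2.ne.symm], ?_,
    fun v hvP hv => eq_of_mem_support_cons_nil hv (ne_of_mem_of_not_mem (hPH v hvP) hu),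
    fun v hvD hv => eq_of_mem_support_cons_nil hv
      (ne_of_mem_of_not_mem (hDH v (by simpa using hvD)) hu), by omega, by omega,
    by simp only [length_reverse, length_cons, length_nil]; omega,
    by rwa [supp_reverse, hCH], by rwa [supp_union_supp_cons_nil],
    by rwa [supp_union_supp_cons_nil, supp_reverse]⟩
  · intro v hvP hvD
    rw [support_reverse, List.mem_reverse] at hvD
    rcases hC.eq_or_eq_of_mem_support_append hvP (List.mem_cons_of_mem a hvD) with h | rfl
    exacts [h, absurd hvD haD]

lemma IsHole.exists_adj_ne {H : Set V} (hH : IsHole G H) {v : V} (hv : v ∈ H) (w : V) :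
    ∃ z ∈ H, G.Adj v z ∧ z ≠ w := by
  obtain ⟨z, hz, hzw⟩ := Set.exists_ne_of_one_lt_ncard (by rw [hH.2.2.2 v hv]; norm_num) w
  exact ⟨z, hz.1, hz.2, hzw⟩

lemma IsHole.isMinorFor_of_subset_edge {H : Set V} (hH : IsHole G H) {u a b : V} (hu : u ∉ H)
    (hne : (nbrsIn G u H).Nonempty) (ha : a ∈ H) (hb : b ∈ H) (hab : G.Adj a b)
    (hsub : nbrsIn G u H ⊆ {a, b}) : IsMinorFor G u H := by
  obtain ⟨c, hc, hbc, hca⟩ := hH.exists_adj_ne hb a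
  refine ⟨hu, hne, a, b, c, ha, hb, hc, hab, hbc, hca.symm, hsub.trans ?_⟩
  exact Set.insert_subset_insert (Set.singleton_subset_iff.mpr (Set.mem_insert _ _))

lemma IsHole.isMinorFor_of_ncard_eq_one {H : Set V} (hH : IsHole G H) {u : V} (hu : u ∉ H)
    (h : (nbrsIn G u H).ncard = 1) : IsMinorFor G u H := by
  obtain ⟨a, hN⟩ := Set.ncard_eq_one.mp h
  have ha : a ∈ nbrsIn G u H := hN ▸ rfl
  obtain ⟨b, hb, hab, -⟩ := hH.exists_adj_ne ha.1 a
  exact hH.isMinorFor_of_subset_edge hu ⟨a, ha⟩ ha.1 hb hab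
    (hN ▸ Set.singleton_subset_iff.mpr (Set.mem_insert _ _))

lemma IsHole.isMinorFor_of_ncard_eq_two {H : Set V} (hT : ¬ HasTheta G) (hH : IsHole G H)
    {u : V} (hu : u ∉ H) (h : (nbrsIn G u H).ncard = 2) : IsMinorFor G u H := by
  obtain ⟨a, b, hab, hN⟩ := Set.ncard_eq_two.mp h
  have ha : a ∈ nbrsIn G u H := hN ▸ Set.mem_insert _ _
  have hb : b ∈ nbrsIn G u H := hN ▸ Set.mem_insert_of_mem _ rfl
  by_cases hadj : G.Adj a b
  · exact hH.isMinorFor_of_subset_edge hu ⟨a, ha⟩ ha.1 hb.1 hadj hN.le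
  · exact absurd (hasTheta_of_nbrsIn_eq_pair hH hu hN hab hadj) hT

lemma IsHole.isMinorFor_of_ncard_eq_three {H : Set V} (hPy : ¬ HasPyramid G) (hH : IsHole G H)
    {u x y : V} (hu : u ∉ H) (h : (nbrsIn G u H).ncard = 3) (hx : x ∈ nbrsIn G u H)
    (hy : y ∈ nbrsIn G u H) (hxy : G.Adj x y) : IsMinorFor G u H := by
  obtain ⟨z, hzxy, hN⟩ : ∃ z ∉ ({x, y} : Set V), insert z {x, y} = nbrsIn G u H :=
    (Set.exists_eq_insert_iff_ncard).mpr
      ⟨Set.insert_subset hx (Set.singleton_subset_iff.mpr hy), by rw [h, Set.ncard_pair hxy.ne]⟩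
  have hz : z ∈ nbrsIn G u H := hN ▸ Set.mem_insert _ _
  have hN' : nbrsIn G u H = {x, y, z} := by rw [← hN, Set.insert_comm, Set.pair_comm]
  simp only [Set.mem_insert_iff, Set.mem_singleton_iff, not_or] at hzxy
  by_cases hxz : G.Adj x z
  · exact ⟨hu, ⟨x, hx⟩, y, x, z, hy.1, hx.1, hz.1, hxy.symm, hxz, Ne.symm hzxy.2,
      (hN'.trans (Set.insert_comm x y {z})).le⟩
  by_cases hyz : G.Adj y z
  · exact ⟨hu, ⟨x, hx⟩, x, y, z, hx.1, hy.1, hz.1, hxy, hyz, Ne.symm hzxy.1, hN'.le⟩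
  exact absurd (hasPyramid_of_nbrsIn_eq_triple hH hu hN.symm hxy (fun h => hxz h.symm) hyz
    hzxy.1 (Ne.symm hzxy.2)) hPy

/-- In a (theta, pyramid, prism, turtle)-free graph, every major vertex for a
hole `H` has at least four neighbors in `H`, or exactly three pairwise
nonadjacent neighbors in `H`. -/
theorem major_vertex_neighbors {V : Type*} (G : SimpleGraph V) (hG : TPPTFree G)
    (H : Set V) (hH : IsHole G H) (u : V) (hu : IsMajorFor G u H) :
    4 ≤ (nbrsIn G u H).ncard ∨
      ((nbrsIn G u H).ncard = 3 ∧
        ∀ a ∈ nbrsIn G u H, ∀ b ∈ nbrsIn G u H, a ≠ b → ¬ G.Adj a b) := by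
  obtain ⟨huH, hne, hnotMinor⟩ := hu
  have hpos : 0 < (nbrsIn G u H).ncard :=
    (Set.ncard_pos (hH.1.subset fun _ h => h.1)).mpr hne
  refine or_iff_not_imp_left.mpr fun hlt => ?_
  interval_cases h : (nbrsIn G u H).ncard
  · exact absurd (hH.isMinorFor_of_ncard_eq_one huH h) hnotMinor
  · exact absurd (hH.isMinorFor_of_ncard_eq_two hG.1 huH h) hnotMinor
  · exact ⟨rfl, fun a ha b hb _ hab =>
      hnotMinor (hH.isMinorFor_of_ncard_eq_three hG.2.1 huH h ha hb hab)⟩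

end Paper
end

section
/- Let G be a finite simple graph containing no theta, pyramid, prism, or turtle as an induced subgraph, and let H be a hole in G. Then every minor vertex u for H satisfies exactly one of the following: u has a unique neighbor in H (u is a pendant of H); u has exactly two neighbors in H and they are adjacent (u is a cap of H); or u has exactly three neighbors in H which induce a path x-y-z of H (u is a clone of y in H). -/
namespace Paper

open SimpleGraph

variable {V : Type*}

/-! Proof idea: the neighbours of a minor vertex `u` lie on a path `a-b-c` of `H`. Every nonempty
subset of `{a, b, c}` other than `{a, c}` makes `u` a pendant, a cap or a clone, and these are
told apart by the number of neighbours of `u` in `H`. If `u` sees exactly `a` and `c`, then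
`a-b-c`, `a-u-c` and the path `H ∖ {b}` from `a` to `c` form a theta: its three holes are `H`,
`H` with `b` replaced by its twin `u`, and the square `a-b-c-u`. -/

lemma _root_.SimpleGraph.Connected.exists_isPath_compl_of_isCycles {W : Type*} [Finite W]
    {K : SimpleGraph W} (hK : K.Connected) (hcyc : K.IsCycles) {b : W}
    (hb : (K.neighborSet b).Nonempty) :
    ∃ (x y : W) (r : K.Walk x y), K.Adj b x ∧ K.Adj b y ∧ x ≠ y ∧ r.IsPath ∧
      ∀ w, w ∈ r.support ↔ w ≠ b := by
  obtain ⟨p, hp, hverts⟩ := hcyc.exists_cycle_toSubgraph_verts_eq_connectedComponentSupp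
    ((K.connectedComponentMk b).mem_supp_iff b |>.mpr rfl) hb
  -- `K` is connected, so `p` runs through every vertex; `r` is `p` with `b` cut out.
  have hall : ∀ w, w ∈ p.support := fun w => by
    rw [← Walk.mem_verts_toSubgraph, hverts, ConnectedComponent.mem_supp_iff,
      ConnectedComponent.eq]
    exact hK.preconnected w b
  have hlen := hp.three_le_length
  cases p with
  | nil => exact absurd hp Walk.not_isCycle_nil
  | cons hby q =>
    have hq := ((Walk.cons_isCycle_iff q hby).mp hp).1.reverse
    obtain ⟨x, hbx, r, hr⟩ := Walk.not_nil_iff.mp (Walk.not_nil_of_ne hby.ne : ¬ q.reverse.Nil)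
    rw [hr, Walk.cons_isPath_iff] at hq
    have hsupp : ∀ w, w ∈ (Walk.cons hby q).support ↔ w = b ∨ w ∈ r.support := by
      intro w
      rw [Walk.support_cons, List.mem_cons, ← List.mem_reverse, ← Walk.support_reverse, hr,
        Walk.support_cons, List.mem_cons]
      tauto
    refine ⟨x, _, r, hbx, hby, fun hxy => ?_, hq.1, fun w => ?_⟩
    · subst hxy
      have hrlen : q.reverse.length = r.length + 1 := by rw [hr, Walk.length_cons]
      rw [Walk.length_eq_zero_iff.mpr (Walk.isPath_iff_nil.mp hq.1)] at hrlen
      simp only [Walk.length_cons, ← Walk.length_reverse q] at hlen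
      omega
    · exact ⟨fun hw hwb => hq.2 (hwb ▸ hw), fun hwb => ((hsupp w).mp (hall w)).resolve_left hwb⟩

section Holes

variable {G : SimpleGraph V} {H : Set V} {a b c u v : V}

lemma nbrsIn_subset (G : SimpleGraph V) (v : V) (H : Set V) : nbrsIn G v H ⊆ H :=
  fun _ hx => hx.1

lemma supp_reverse_s4 {P : G.Walk a b} : supp P.reverse = supp P := by
  ext; simp [supp]

lemma ncard_supp_of_isPath {P : G.Walk a b} (hP : P.IsPath) :
    (supp P).ncard = P.length + 1 := by
  classical
  rw [show supp P = ↑P.support.toFinset by ext; simp [supp], Set.ncard_coe_finset,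
    List.toFinset_card_of_nodup hP.support_nodup, Walk.length_support]

lemma IsHole.nbrsIn_eq_pair (hH : IsHole G H) (hv : v ∈ H) (ha : a ∈ nbrsIn G v H)
    (hc : c ∈ nbrsIn G v H) (hac : a ≠ c) : nbrsIn G v H = {a, c} :=
  (Set.eq_of_subset_of_ncard_le (Set.insert_subset ha (Set.singleton_subset_iff.mpr hc))
    (by rw [hH.2.2.2 v hv, Set.ncard_pair hac]) (hH.1.subset (nbrsIn_subset G v H))).symm

lemma IsHole.isCycles_induce (hH : IsHole G H) : (G.induce H).IsCycles := by
  intro v _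
  have : (G.induce H).neighborSet v = Subtype.val ⁻¹' nbrsIn G v H := by
    ext w; simp [nbrsIn]
  rw [this, Set.ncard_preimage_of_injective_subset_range Subtype.val_injective
    (by simpa using nbrsIn_subset G v H)]
  exact hH.2.2.2 v v.2

lemma IsHole.exists_isPath_supp_eq_sdiff (hH : IsHole G H) (hb : b ∈ H)
    (hN : nbrsIn G b H = {a, c}) : ∃ Q : G.Walk a c, Q.IsPath ∧ supp Q = H \ {b} := by
  have := hH.1.to_subtype
  have ha : a ∈ nbrsIn G b H := hN ▸ Set.mem_insert a {c}
  obtain ⟨x, y, r, hbx, hby, hxy, hr, hsupp⟩ :=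
    hH.2.2.1.exists_isPath_compl_of_isCycles hH.isCycles_induce (b := ⟨b, hb⟩)
      ⟨⟨a, ha.1⟩, by simpa using ha.2⟩
  set R := r.map (Embedding.induce H).toHom
  have hR : supp R = H \ {b} := by
    ext w
    simp only [R, supp, Walk.support_map, List.mem_map, Set.mem_ofPred_eq, hsupp]
    constructor
    · rintro ⟨w', hw', rfl⟩
      exact ⟨w'.2, fun h => hw' (Subtype.ext h)⟩
    · rintro ⟨hwH, hwb⟩
      exact ⟨⟨w, hwH⟩, fun h => hwb (congrArg Subtype.val h), rfl⟩
  obtain ⟨s, t, Q, hs, ht, hst, hQ, hQsupp⟩ : ∃ (s t : V) (Q : G.Walk s t),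
      s ∈ ({a, c} : Set V) ∧ t ∈ ({a, c} : Set V) ∧ s ≠ t ∧ Q.IsPath ∧
        supp Q = H \ {b} :=
    ⟨x, y, R, hN ▸ ⟨x.2, by simpa using hbx⟩, hN ▸ ⟨y.2, by simpa using hby⟩,
      fun h => hxy (Subtype.ext h), hr.map Subtype.val_injective, hR⟩
  rcases hs with rfl | rfl <;> rcases ht with rfl | rfl
  · exact absurd rfl hst
  · exact ⟨Q, hQ, hQsupp⟩
  · exact ⟨Q.reverse, hQ.reverse, supp_reverse_s4.trans hQsupp⟩
  · exact absurd rfl hst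

lemma IsHole.not_adj_of_nbrsIn_eq_pair (hH : IsHole G H) (hb : b ∈ H)
    (hN : nbrsIn G b H = {a, c}) : ¬ G.Adj a c := by
  obtain ⟨Q, hQ, hsupp⟩ := hH.exists_isPath_supp_eq_sdiff hb hN
  have ha : a ∈ nbrsIn G b H := hN ▸ Set.mem_insert a {c}
  have hlen : Q.length + 1 = H.ncard - 1 := by
    rw [← ncard_supp_of_isPath hQ, hsupp, Set.ncard_sdiff_singleton_of_mem hb]
  have := hH.2.1
  cases Q with
  | nil => simp only [Walk.length_nil] at hlen; omega
  | @cons _ d _ had Q' =>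
    intro hac
    have hdc : d ≠ c := by
      rintro rfl
      have := Walk.length_eq_zero_iff.mpr
        (Walk.isPath_iff_nil.mp ((Walk.cons_isPath_iff _ _).mp hQ).1)
      simp only [Walk.length_cons] at hlen
      omega
    have hd : d ∈ H \ {b} := hsupp ▸ (show d ∈ supp (Walk.cons had Q') by simp [supp])
    have hc : c ∈ H \ {b} := hsupp ▸ (Walk.cons had Q').end_mem_support
    have hc' : c ∈ nbrsIn G a H := ⟨hc.1, hac⟩
    rw [hH.nbrsIn_eq_pair ha.1 ⟨hb, ha.2.symm⟩ ⟨hd.1, had⟩ (Ne.symm hd.2)] at hc'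
    exact hc'.elim hc.2 hdc.symm

lemma adj_swap_iff [DecidableEq V] (hv : G.Adj v u ↔ G.Adj v b) (x : V) :
    G.Adj v (Equiv.swap u b x) ↔ G.Adj v x := by
  rcases eq_or_ne x u with rfl | hxu
  · rw [Equiv.swap_apply_left, hv]
  rcases eq_or_ne x b with rfl | hxb
  · rw [Equiv.swap_apply_right, hv]
  · rw [Equiv.swap_apply_of_ne_of_ne hxu hxb]

lemma insert_sdiff_eq_preimage_swap [DecidableEq V] (hb : b ∈ H) (hu : u ∉ H) :
    insert u (H \ {b}) = Equiv.swap u b ⁻¹' H := by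
  ext x
  rcases eq_or_ne x u with rfl | hxu
  · simp [hb]
  rcases eq_or_ne x b with rfl | hxb
  · simp [hu, hxu]
  · simp [Equiv.swap_apply_of_ne_of_ne hxu hxb, hxu, hxb]

lemma nbrsIn_insert_sdiff_eq_preimage_swap [DecidableEq V] (hb : b ∈ H) (hu : u ∉ H)
    (hv : G.Adj v u ↔ G.Adj v b) :
    nbrsIn G v (insert u (H \ {b})) = Equiv.swap u b ⁻¹' nbrsIn G v H := by
  ext x
  simp only [nbrsIn, Set.mem_preimage, Set.mem_ofPred_eq, adj_swap_iff hv,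
    insert_sdiff_eq_preimage_swap hb hu]

lemma ncard_preimage_swap [DecidableEq V] (u b : V) (s : Set V) :
    (Equiv.swap u b ⁻¹' s).ncard = s.ncard :=
  Set.ncard_preimage_of_injective_subset_range (Equiv.injective _) (by simp)

lemma IsHole.insert_sdiff_of_nbrsIn_eq (hH : IsHole G H) (hb : b ∈ H) (hu : u ∉ H)
    (hub : ¬ G.Adj u b) (hN : nbrsIn G u H = nbrsIn G b H)
    (hconn : (G.induce (H \ {b})).Preconnected) :
    IsHole G (insert u (H \ {b})) := by
  classical
  have hswap : ∀ v ∈ insert u (H \ {b}), G.Adj v u ↔ G.Adj v b := by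
    rintro v (rfl | ⟨hv, -⟩)
    · simp [hub]
    · simpa [nbrsIn, hv, G.adj_comm] using congrArg (v ∈ ·) hN
  obtain ⟨a, ha⟩ : (nbrsIn G b H).Nonempty :=
    Set.nonempty_of_ncard_ne_zero (by rw [hH.2.2.2 b hb]; norm_num)
  refine ⟨hH.1.sdiff.insert u, ?_, ?_, fun v hv => ?_⟩
  · rw [insert_sdiff_eq_preimage_swap hb hu, ncard_preimage_swap]
    exact hH.2.1
  · rw [Set.insert_eq]
    exact connected_induce_union Preconnected.of_subsingleton hconn (Set.mem_singleton u)
      ⟨ha.1, ha.2.ne'⟩ (hN ▸ ha).2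
  · rw [nbrsIn_insert_sdiff_eq_preimage_swap hb hu (hswap v hv), ncard_preimage_swap]
    rcases hv with rfl | ⟨hv, -⟩
    · rw [hN]; exact hH.2.2.2 b hb
    · exact hH.2.2.2 v hv

lemma ncard_nbrsIn_cycle4 {d : V} (hab : G.Adj a b) (hda : G.Adj d a) (hac : ¬ G.Adj a c)
    (hbd : b ≠ d) : (nbrsIn G a {a, b, c, d}).ncard = 2 := by
  have : nbrsIn G a {a, b, c, d} = {b, d} := by
    ext x
    simp only [nbrsIn, Set.mem_insert_iff, Set.mem_singleton_iff, Set.mem_ofPred_eq]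
    constructor
    · rintro ⟨rfl | rfl | rfl | rfl, h⟩
      exacts [absurd h (G.loopless.irrefl _), Or.inl rfl, absurd h hac, Or.inr rfl]
    · rintro (rfl | rfl)
      exacts [⟨Or.inr (Or.inl rfl), hab⟩, ⟨Or.inr (Or.inr (Or.inr rfl)), hda.symm⟩]
  rw [this, Set.ncard_pair hbd]

lemma isHole_cycle4 {d : V} (hab : G.Adj a b) (hbc : G.Adj b c) (hcd : G.Adj c d)
    (hda : G.Adj d a) (hac : ¬ G.Adj a c) (hbd : ¬ G.Adj b d) (hac' : a ≠ c) (hbd' : b ≠ d) :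
    IsHole G {a, b, c, d} := by
  refine ⟨Set.toFinite _, ?_, ?_, ?_⟩
  · rw [Set.ncard_insert_of_notMem (by simp [hab.ne, hac', hda.ne']),
      Set.ncard_insert_of_notMem (by simp [hbc.ne, hbd']), Set.ncard_pair hcd.ne]
  · rw [show ({a, b, c, d} : Set V) = supp (Walk.cons hab (.cons hbc (.cons hcd .nil))) by
      ext; simp [supp]]
    exact Walk.connected_induce_support _
  · intro v hv
    rcases hv with rfl | rfl | rfl | rfl
    · exact ncard_nbrsIn_cycle4 hab hda hac hbd'
    · rw [show ({a, v, c, d} : Set V) = {v, c, d, a} by ext; simp; tauto]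
      exact ncard_nbrsIn_cycle4 hbc hab hbd (Ne.symm hac')
    · rw [show ({a, b, v, d} : Set V) = {v, d, a, b} by ext; simp; tauto]
      exact ncard_nbrsIn_cycle4 hcd hbc (fun h => hac h.symm) hbd'.symm
    · rw [show ({a, b, c, v} : Set V) = {v, a, b, c} by ext; simp; tauto]
      exact ncard_nbrsIn_cycle4 hda hcd (fun h => hbd h.symm) hac'

lemma supp_cons_cons_nil (h₁ : G.Adj a b) (h₂ : G.Adj b c) :
    supp (Walk.cons h₁ (.cons h₂ .nil)) = {a, b, c} := by
  ext; simp [supp]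

lemma isPath_cons_cons_nil (h₁ : G.Adj a b) (h₂ : G.Adj b c) (hac : a ≠ c) :
    (Walk.cons h₁ (.cons h₂ .nil)).IsPath := by
  simp [Walk.cons_isPath_iff, h₁.ne, h₂.ne, hac]

lemma IsHole.hasTheta_of_nbrsIn_eq (hH : IsHole G H) (hb : b ∈ H) (hN : nbrsIn G b H = {a, c})
    (hac : a ≠ c) (hu : u ∉ H) (huN : nbrsIn G u H = {a, c}) : HasTheta G := by
  have ha : a ∈ nbrsIn G b H := hN ▸ Set.mem_insert a {c}
  have hc : c ∈ nbrsIn G b H := hN ▸ Set.mem_insert_of_mem a rfl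
  have hua : a ∈ nbrsIn G u H := huN ▸ Set.mem_insert a {c}
  have huc : c ∈ nbrsIn G u H := huN ▸ Set.mem_insert_of_mem a rfl
  have haH := ha.1
  have hcH := hc.1
  have hba := ha.2.ne
  have hbc := hc.2.ne
  have hub : u ≠ b := fun h => hu (h ▸ hb)
  have hnub : ¬ G.Adj u b := fun h => by
    have hbN : b ∈ nbrsIn G u H := ⟨hb, h⟩
    rw [huN] at hbN
    exact hbN.elim hba hbc
  obtain ⟨Q, hQ, hQsupp⟩ := hH.exists_isPath_supp_eq_sdiff hb hN
  have hQlen : 2 ≤ Q.length := by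
    have := ncard_supp_of_isPath hQ
    rw [hQsupp, Set.ncard_sdiff_singleton_of_mem hb] at this
    have := hH.2.1
    omega
  have hQmem : ∀ v, v ∈ Q.support → v ∈ H ∧ v ≠ b := fun v hv =>
    (show v ∈ H \ {b} from hQsupp ▸ hv)
  refine ⟨a, c, Q, .cons ha.2.symm (.cons hc.2 .nil), .cons hua.2.symm (.cons huc.2 .nil), hac,
    hH.not_adj_of_nbrsIn_eq_pair hb hN, hQ, isPath_cons_cons_nil _ _ hac,
    isPath_cons_cons_nil _ _ hac, hQlen, le_rfl, le_rfl, ?_, ?_, ?_, ?_, ?_, ?_⟩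
  iterate 3
    intro v hv hv'
    simp only [Walk.support_cons, Walk.support_nil, List.mem_cons, List.not_mem_nil] at hv hv'
    grind
  · rw [supp_cons_cons_nil, hQsupp]
    convert hH using 1
    ext v
    grind
  · rw [supp_cons_cons_nil, hQsupp]
    have hQconn : (G.induce (supp Q)).Connected := Q.connected_induce_support
    rw [hQsupp] at hQconn
    convert hH.insert_sdiff_of_nbrsIn_eq hb hu hnub (huN.trans hN.symm) hQconn.preconnected
      using 1
    ext v
    grind
  · rw [supp_cons_cons_nil, supp_cons_cons_nil]
    convert isHole_cycle4 ha.2.symm hc.2 huc.2.symm hua.2 (hH.not_adj_of_nbrsIn_eq_pair hb hN)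
      (fun h => hnub h.symm) hac hub.symm using 1
    ext v
    grind

lemma IsPendant.ncard_nbrsIn (h : IsPendant G u H) : (nbrsIn G u H).ncard = 1 := by
  obtain ⟨-, a, ha⟩ := h
  rw [ha, Set.ncard_singleton]

lemma IsCap.ncard_nbrsIn (h : IsCap G u H) : (nbrsIn G u H).ncard = 2 := by
  obtain ⟨-, a, b, hab, -, hN⟩ := h
  rw [hN, Set.ncard_pair hab]

lemma IsClone.ncard_nbrsIn (h : IsClone G u H) : (nbrsIn G u H).ncard = 3 := by
  obtain ⟨b, -, a, c, -, -, -, hab, hbc, hac, hN⟩ := h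
  rw [hN, Set.ncard_eq_three]
  exact ⟨a, b, c, hab.ne, hac, hbc.ne, rfl⟩

lemma IsMinorFor.isPendant_or_isCap_or_isClone (hT : ¬ HasTheta G) (hH : IsHole G H)
    (hu : IsMinorFor G u H) : IsPendant G u H ∨ IsCap G u H ∨ IsClone G u H := by
  obtain ⟨huH, hne, a, b, c, haH, hbH, hcH, hab, hbc, hac, hsub⟩ := hu
  have hS : nbrsIn G u H = {a, b, c} ∩ nbrsIn G u H := (Set.inter_eq_right.mpr hsub).symm
  by_cases ha : a ∈ nbrsIn G u H <;> by_cases hb : b ∈ nbrsIn G u H <;>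
    by_cases hc : c ∈ nbrsIn G u H <;>
    simp only [Set.insert_inter_of_mem, Set.insert_inter_of_notMem, Set.singleton_inter_of_mem,
      Set.singleton_inter_of_notMem, LawfulSingleton.insert_empty_eq, ha, hb, hc,
      not_false_eq_true] at hS
  · exact Or.inr (Or.inr ⟨b, huH, a, c, haH, hbH, hcH, hab, hbc, hac, hS⟩)
  · exact Or.inr (Or.inl ⟨huH, a, b, hab.ne, hab, hS⟩)
  · exact absurd (hH.hasTheta_of_nbrsIn_eq hbH
      (hH.nbrsIn_eq_pair hbH ⟨haH, hab.symm⟩ ⟨hcH, hbc⟩ hac) hac huH hS) hT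
  · exact Or.inl ⟨huH, a, hS⟩
  · exact Or.inr (Or.inl ⟨huH, b, c, hbc.ne, hbc, hS⟩)
  · exact Or.inl ⟨huH, b, hS⟩
  · exact Or.inl ⟨huH, c, hS⟩
  · exact absurd hS hne.ne_empty

end Holes

/-- In a (theta, pyramid, prism, turtle)-free graph, every minor vertex for a
hole `H` is exactly one of: a pendant of `H`, a cap of `H`, or a clone in `H`. -/
theorem minor_vertex_trichotomy {V : Type*} (G : SimpleGraph V) (hG : TPPTFree G)
    (H : Set V) (hH : IsHole G H) (u : V) (hu : IsMinorFor G u H) :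
    (IsPendant G u H ∧ ¬ IsCap G u H ∧ ¬ IsClone G u H) ∨
    (¬ IsPendant G u H ∧ IsCap G u H ∧ ¬ IsClone G u H) ∨
    (¬ IsPendant G u H ∧ ¬ IsCap G u H ∧ IsClone G u H) := by
  rcases hu.isPendant_or_isCap_or_isClone hG.1 hH with h | h | h
  · refine Or.inl ⟨h, fun h' => ?_, fun h' => ?_⟩ <;>
      linarith [h.ncard_nbrsIn, h'.ncard_nbrsIn]
  · refine Or.inr (Or.inl ⟨fun h' => ?_, h, fun h' => ?_⟩) <;>
      linarith [h.ncard_nbrsIn, h'.ncard_nbrsIn]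
  · refine Or.inr (Or.inr ⟨fun h' => ?_, fun h' => ?_, h⟩) <;>
      linarith [h.ncard_nbrsIn, h'.ncard_nbrsIn]

end Paper
end
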